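/- arXiv:1410.5075 — 4 statements merged into one kernel-verified Lean document; each statement's English description precedes it below -/
import Mathlib

section
/- Let F : C ⟶ D be a pseudofunctor between bicategories and let W be a class of 1-morphisms in C. If F sends every 1-morphism of W to an internal equivalence of D, then F sends every 1-morphism of the right saturation W_sat of W to an internal equivalence of D. -/
open CategoryTheory Bicategory

universe w v u w' v' u'

/-- A 1-morphism `e : a ⟶ b` in a bicategory is an internal equivalence if there are a
1-morphism `e' : b ⟶ a` and invertible 2-morphisms `𝟙 a ⟹ e' ∘ e` and `e ∘ e' ⟹ 𝟙 b`
(here `e' ∘ e = e ≫ e'` in Lean's composition order). -/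
def IsInternalEquiv {B : Type u} [Bicategory.{w, v} B] {a b : B} (e : a ⟶ b) : Prop :=
  ∃ e' : b ⟶ a, Nonempty (𝟙 a ≅ e ≫ e') ∧ Nonempty (e' ≫ e ≅ 𝟙 b)

/-- The right saturation of a class `W` of 1-morphisms in a bicategory: `f : b ⟶ a` belongs
to `RightSat W` if there are objects `c`, `d` and 1-morphisms `g : c ⟶ b`, `h : d ⟶ c` such
that both `f ∘ g = g ≫ f` and `g ∘ h = h ≫ g` belong to `W`. -/
def RightSat {B : Type u} [Bicategory.{w, v} B] (W : ∀ ⦃x y : B⦄, (x ⟶ y) → Prop)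
    {b a : B} (f : b ⟶ a) : Prop :=
  ∃ (c d : B) (g : c ⟶ b) (h : d ⟶ c), W (g ≫ f) ∧ W (h ≫ g)

section Aux

variable {B : Type u} [Bicategory.{w, v} B]

/-- Transport of internal equivalence along an iso of 1-morphisms. -/
lemma isInternalEquiv_of_iso {a b : B} {e e' : a ⟶ b} (η : e ≅ e')
    (he : IsInternalEquiv e) : IsInternalEquiv e' := by
  obtain ⟨k, ⟨α⟩, ⟨β⟩⟩ := he
  exact ⟨k, ⟨α ≪≫ whiskerRightIso η k⟩, ⟨whiskerLeftIso k η.symm ≪≫ β⟩⟩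

/-- A 1-morphism with a left inverse and a right inverse up to iso is an internal
equivalence. -/
lemma isInternalEquiv_of_left_right {a b : B} (e : a ⟶ b) (l r : b ⟶ a)
    (hl : l ≫ e ≅ 𝟙 b) (hr : e ≫ r ≅ 𝟙 a) : IsInternalEquiv e := by
  have hrl : r ≅ l :=
    calc r ≅ 𝟙 b ≫ r := (λ_ r).symm
      _ ≅ (l ≫ e) ≫ r := whiskerRightIso hl.symm r
      _ ≅ l ≫ e ≫ r := α_ l e r
      _ ≅ l ≫ 𝟙 a := whiskerLeftIso l hr
      _ ≅ l := ρ_ l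
  exact ⟨r, ⟨hr.symm⟩, ⟨whiskerRightIso hrl e ≪≫ hl⟩⟩

/-- If `e ≫ f` is an internal equivalence, then `e` has a right inverse up to iso. -/
lemma right_inv_of_comp {a b c : B} {e : a ⟶ b} {f : b ⟶ c}
    (hef : IsInternalEquiv (e ≫ f)) : ∃ r : b ⟶ a, Nonempty (e ≫ r ≅ 𝟙 a) := by
  obtain ⟨w, ⟨γ⟩, -⟩ := hef
  exact ⟨f ≫ w, ⟨(α_ e f w).symm ≪≫ γ.symm⟩⟩

/-- If `e ≫ f` is an internal equivalence, then `f` has a left inverse up to iso. -/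
lemma left_inv_of_comp {a b c : B} {e : a ⟶ b} {f : b ⟶ c}
    (hef : IsInternalEquiv (e ≫ f)) : ∃ l : c ⟶ b, Nonempty (l ≫ f ≅ 𝟙 c) := by
  obtain ⟨w, -, ⟨δ⟩⟩ := hef
  exact ⟨w ≫ e, ⟨α_ w e f ≪≫ δ⟩⟩

/-- Left cancellation: if `e` and `e ≫ f` are internal equivalences, then so is `f`. -/
lemma isInternalEquiv_cancel_left {a b c : B} {e : a ⟶ b} {f : b ⟶ c}
    (he : IsInternalEquiv e) (hef : IsInternalEquiv (e ≫ f)) : IsInternalEquiv f := by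
  obtain ⟨e', -, ⟨β⟩⟩ := he
  obtain ⟨w, ⟨γ⟩, ⟨δ⟩⟩ := hef
  refine isInternalEquiv_of_left_right f (w ≫ e) (w ≫ e) (α_ w e f ≪≫ δ) ?_
  calc f ≫ w ≫ e ≅ 𝟙 b ≫ f ≫ w ≫ e := (λ_ _).symm
    _ ≅ (e' ≫ e) ≫ f ≫ w ≫ e := whiskerRightIso β.symm _
    _ ≅ e' ≫ e ≫ f ≫ w ≫ e := α_ e' e _
    _ ≅ e' ≫ e ≫ (f ≫ w) ≫ e := whiskerLeftIso e' (whiskerLeftIso e (α_ f w e).symm)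
    _ ≅ e' ≫ (e ≫ f ≫ w) ≫ e := whiskerLeftIso e' (α_ e (f ≫ w) e).symm
    _ ≅ e' ≫ ((e ≫ f) ≫ w) ≫ e := whiskerLeftIso e' (whiskerRightIso (α_ e f w).symm e)
    _ ≅ e' ≫ 𝟙 a ≫ e := whiskerLeftIso e' (whiskerRightIso γ.symm e)
    _ ≅ e' ≫ e := whiskerLeftIso e' (λ_ e)
    _ ≅ 𝟙 b := β

end Aux

/-- If a pseudofunctor `F : B ⥤ C` sends every 1-morphism of `W` to an internal equivalence,
then it sends every 1-morphism of the right saturation of `W` to an internal equivalence. -/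
theorem pseudofunctor_map_rightSat_isInternalEquiv
    {B : Type u} [Bicategory.{w, v} B] {C : Type u'} [Bicategory.{w', v'} C]
    (F : Pseudofunctor B C) (W : ∀ ⦃x y : B⦄, (x ⟶ y) → Prop)
    (hF : ∀ ⦃x y : B⦄ (f : x ⟶ y), W f → IsInternalEquiv (F.map f))
    {b a : B} (f : b ⟶ a) (hf : RightSat W f) : IsInternalEquiv (F.map f) := by
  obtain ⟨c, d, g, h, hgf, hhg⟩ := hf
  have hu : IsInternalEquiv (F.map g ≫ F.map f) :=
    isInternalEquiv_of_iso (F.mapComp g f) (hF _ hgf)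
  have hv : IsInternalEquiv (F.map h ≫ F.map g) :=
    isInternalEquiv_of_iso (F.mapComp h g) (hF _ hhg)
  obtain ⟨r, ⟨hr⟩⟩ := right_inv_of_comp hu
  obtain ⟨l, ⟨hl⟩⟩ := left_inv_of_comp hv
  have hg : IsInternalEquiv (F.map g) := isInternalEquiv_of_left_right _ l r hl hr
  exact isInternalEquiv_cancel_left hg hu
end

section
/- Let C be a bicategory. Call a 1-morphism f : A ⟶ A a quasi-unit if there exists an invertible 2-morphism f ⟹ 𝟙_A. Then the right saturation of the class of quasi-units of C is exactly the class of internal equivalences of C. -/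
open CategoryTheory Bicategory

universe w v u

/-- The identity 1-morphism transported along an equality of objects. -/
def idOfEq {B : Type u} [Bicategory.{w, v} B] {a b : B} (h : a = b) : a ⟶ b := by
  subst h; exact 𝟙 a

/-- A 1-morphism is a quasi-unit if it is isomorphic (via an invertible 2-morphism) to an
identity; equivalently, its source and target coincide and it is isomorphic to the
identity of that object. -/
def IsQuasiUnit {B : Type u} [Bicategory.{w, v} B] {a b : B} (f : a ⟶ b) : Prop :=
  ∃ h : a = b, Nonempty (f ≅ idOfEq h)

/-- The right saturation of the class of quasi-units of a bicategory is exactly the class of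
internal equivalences. -/
theorem rightSat_quasiUnit_iff_isInternalEquiv {B : Type u} [Bicategory.{w, v} B]
    {b a : B} (f : b ⟶ a) :
    RightSat (fun _ _ g => IsQuasiUnit g) f ↔ IsInternalEquiv f := by
  constructor
  · rintro ⟨c, d, g, h, ⟨rfl, ⟨i⟩⟩, ⟨rfl, ⟨j⟩⟩⟩
    simp only [idOfEq] at i j
    refine ⟨g, ⟨?_⟩, ⟨?_⟩⟩
    · have fIso : f ≅ h :=
        (λ_ f).symm ≪≫ whiskerRightIso j.symm f ≪≫ α_ h g f ≪≫ whiskerLeftIso h i ≪≫ ρ_ h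
      exact j.symm ≪≫ whiskerRightIso fIso.symm g
    · exact i
  · rintro ⟨e', ⟨α⟩, ⟨β⟩⟩
    exact ⟨a, b, e', f, ⟨rfl, ⟨β⟩⟩, ⟨rfl, ⟨α.symm⟩⟩⟩
end

section
/- Let φ : (Y₁ ⇉ Y₀) ⟶ (X₁ ⇉ X₀) be a morphism of topological (or Lie) groupoids such that both structure maps of all groupoids involved are étale (local homeomorphisms/local diffeomorphisms). Suppose there are morphisms of étale groupoids ξ : U ⟶ Z and ψ : Z ⟶ Y such that both composites φ ∘ ψ and ψ ∘ ξ are Morita equivalences. Then φ is a Morita equivalence. -/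
open Function

/-- A (topological) étale groupoid: a groupoid object in topological spaces whose
structure maps are étale (local homeomorphisms). -/
structure EtaleGroupoid where
  /-- space of objects -/
  Obj : Type
  /-- space of arrows -/
  Mor : Type
  [topObj : TopologicalSpace Obj]
  [topMor : TopologicalSpace Mor]
  /-- source map -/
  s : Mor → Obj
  /-- target map -/
  t : Mor → Obj
  /-- unit map -/
  unit : Obj → Mor
  /-- inversion -/
  inv : Mor → Mor
  /-- composition `m g f` of `g` after `f`, defined when `s g = t f` -/
  m : (g f : Mor) → s g = t f → Mor
  s_unit : ∀ x, s (unit x) = x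
  t_unit : ∀ x, t (unit x) = x
  s_m : ∀ g f h, s (m g f h) = s f
  t_m : ∀ g f h, t (m g f h) = t g
  s_inv : ∀ g, s (inv g) = t g
  t_inv : ∀ g, t (inv g) = s g
  m_assoc : ∀ (h g f : Mor) (hhg : s h = t g) (hgf : s g = t f),
    m (m h g hhg) f ((s_m h g hhg).trans hgf) =
      m h (m g f hgf) (hhg.trans (t_m g f hgf).symm)
  m_unit : ∀ g, m g (unit (s g)) (t_unit (s g)).symm = g
  unit_m : ∀ g, m (unit (t g)) g (s_unit (t g)) = g
  inv_m : ∀ g, m (inv g) g (s_inv g) = unit (s g)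
  m_inv : ∀ g, m g (inv g) (t_inv g).symm = unit (t g)
  continuous_s : Continuous s
  continuous_t : Continuous t
  continuous_unit : Continuous unit
  continuous_inv : Continuous inv
  continuous_m : Continuous (fun p : {p : Mor × Mor // s p.1 = t p.2} => m p.1.1 p.1.2 p.2)
  etale_s : IsLocalHomeomorph s
  etale_t : IsLocalHomeomorph t

attribute [instance] EtaleGroupoid.topObj EtaleGroupoid.topMor

/-- A (continuous) morphism of étale groupoids. -/
structure EtaleGroupoid.Hom (G H : EtaleGroupoid) where
  /-- the map on objects -/
  obj : G.Obj → H.Obj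
  /-- the map on arrows -/
  mor : G.Mor → H.Mor
  continuous_obj : Continuous obj
  continuous_mor : Continuous mor
  s_comm : ∀ g, H.s (mor g) = obj (G.s g)
  t_comm : ∀ g, H.t (mor g) = obj (G.t g)
  unit_comm : ∀ x, mor (G.unit x) = H.unit (obj x)
  m_comm : ∀ (g f : G.Mor) (h : G.s g = G.t f),
    mor (G.m g f h) = H.m (mor g) (mor f)
      ((s_comm g).trans (congrArg obj h) |>.trans (t_comm f).symm)

/-- Composition of morphisms of étale groupoids: `φ.comp ψ` is `φ ∘ ψ`. -/
def EtaleGroupoid.Hom.comp {G H K : EtaleGroupoid} (φ : EtaleGroupoid.Hom H K)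
    (ψ : EtaleGroupoid.Hom G H) : EtaleGroupoid.Hom G K where
  obj := φ.obj ∘ ψ.obj
  mor := φ.mor ∘ ψ.mor
  continuous_obj := φ.continuous_obj.comp ψ.continuous_obj
  continuous_mor := φ.continuous_mor.comp ψ.continuous_mor
  s_comm g := by simp [φ.s_comm, ψ.s_comm]
  t_comm g := by simp [φ.t_comm, ψ.t_comm]
  unit_comm x := by simp [ψ.unit_comm, φ.unit_comm]
  m_comm g f h := by simp only [Function.comp_apply, ψ.m_comm, φ.m_comm]

/-- Condition (V1) of a Morita equivalence `φ : Y ⟶ X`: the map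
`t ∘ pr₁ : X₁ ×_{s, X₀, φ₀} Y₀ ⟶ X₀` is a surjective open map. -/
def EtaleGroupoid.Hom.EssSurj {Y X : EtaleGroupoid} (φ : EtaleGroupoid.Hom Y X) : Prop :=
  Surjective (fun p : {p : X.Mor × Y.Obj // X.s p.1 = φ.obj p.2} => X.t p.1.1) ∧
  IsOpenMap (fun p : {p : X.Mor × Y.Obj // X.s p.1 = φ.obj p.2} => X.t p.1.1)

/-- The canonical comparison map `γ : Y₁ ⟶ X₁ ×_{X₀ × X₀} (Y₀ × Y₀)` induced by
`φ₁` and `(s, t)`. -/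
def EtaleGroupoid.Hom.compare {Y X : EtaleGroupoid} (φ : EtaleGroupoid.Hom Y X) :
    Y.Mor → {p : X.Mor × (Y.Obj × Y.Obj) //
      X.s p.1 = φ.obj p.2.1 ∧ X.t p.1 = φ.obj p.2.2} :=
  fun g => ⟨(φ.mor g, (Y.s g, Y.t g)), φ.s_comm g, φ.t_comm g⟩

/-- Condition (V2) of a Morita equivalence: the square comparing `Y₁` with the pullback of
`(s, t) : X₁ ⟶ X₀ × X₀` along `φ₀ × φ₀` is cartesian, i.e. the comparison map is a
homeomorphism. -/
def EtaleGroupoid.Hom.FullyFaithful {Y X : EtaleGroupoid}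
    (φ : EtaleGroupoid.Hom Y X) : Prop :=
  IsHomeomorph φ.compare

/-- A morphism of étale groupoids is a Morita (essential) equivalence if it satisfies
conditions (V1) and (V2). -/
def EtaleGroupoid.Hom.IsMorita {Y X : EtaleGroupoid}
    (φ : EtaleGroupoid.Hom Y X) : Prop :=
  φ.EssSurj ∧ φ.FullyFaithful


namespace EtaleGroupoid

/-! ### Algebraic lemmas in a groupoid -/

theorem m_congr (G : EtaleGroupoid) {a a' b b' : G.Mor} (ha : a = a') (hb : b = b')
    (h : G.s a = G.t b) :
    G.m a b h = G.m a' b' (by rw [← ha, ← hb]; exact h) := by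
  subst ha; subst hb; rfl

theorem m_unit' (G : EtaleGroupoid) (a : G.Mor) (x : G.Obj) (hx : G.s a = x)
    (h : G.s a = G.t (G.unit x)) : G.m a (G.unit x) h = a := by
  subst hx; exact G.m_unit a

theorem unit_m' (G : EtaleGroupoid) (b : G.Mor) (x : G.Obj) (hx : x = G.t b)
    (h : G.s (G.unit x) = G.t b) : G.m (G.unit x) b h = b := by
  subst hx; exact G.unit_m b

/-- `(a ∘ b) ∘ b⁻¹ = a`. -/
theorem m_m_inv (G : EtaleGroupoid) (a b : G.Mor) (h : G.s a = G.t b)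
    (h' : G.s (G.m a b h) = G.t (G.inv b)) : G.m (G.m a b h) (G.inv b) h' = a := by
  refine (G.m_assoc a b (G.inv b) h (G.t_inv b).symm).trans ?_
  refine (G.m_congr rfl (G.m_inv b) _).trans ?_
  exact G.m_unit' a (G.t b) h _

/-- `a ∘ (a⁻¹ ∘ b) = b`. -/
theorem m_inv_m (G : EtaleGroupoid) (a b : G.Mor) (h : G.s (G.inv a) = G.t b)
    (h' : G.s a = G.t (G.m (G.inv a) b h)) : G.m a (G.m (G.inv a) b h) h' = b := by
  refine ((G.m_assoc a (G.inv a) b (G.t_inv a).symm h).symm).trans ?_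
  refine (G.m_congr (G.m_inv a) rfl _).trans ?_
  exact G.unit_m' b (G.t a) ((G.s_inv a).symm.trans h) _

/-- `(A ∘ ((A⁻¹ ∘ x) ∘ B)) ∘ B⁻¹ = x`. -/
theorem sandwich (G : EtaleGroupoid) (A B x : G.Mor)
    (h1 : G.s (G.inv A) = G.t x) (h2 : G.s (G.m (G.inv A) x h1) = G.t B)
    (h3 : G.s A = G.t (G.m (G.m (G.inv A) x h1) B h2))
    (h4 : G.s (G.m A (G.m (G.m (G.inv A) x h1) B h2) h3) = G.t (G.inv B)) :
    G.m (G.m A (G.m (G.m (G.inv A) x h1) B h2) h3) (G.inv B) h4 = x := by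
  have h2' : G.s x = G.t B := (G.s_m (G.inv A) x h1).symm.trans h2
  have e1 : G.m A (G.m (G.m (G.inv A) x h1) B h2) h3 =
      G.m x B h2' := by
    refine ((G.m_assoc A (G.m (G.inv A) x h1) B
      (((G.t_m (G.inv A) x h1).trans (G.t_inv A)).symm) h2).symm).trans ?_
    exact G.m_congr (G.m_inv_m A x h1 _) rfl _
  refine (G.m_congr e1 rfl _).trans ?_
  exact G.m_m_inv x B h2' _

theorem inv_unique (G : EtaleGroupoid) (a b : G.Mor) (h : G.s a = G.t b)
    (hab : G.m a b h = G.unit (G.t a)) : b = G.inv a := by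
  have e2 : G.m (G.m (G.inv a) a (G.s_inv a)) b
      ((G.s_m (G.inv a) a (G.s_inv a)).trans h) = b := by
    refine (G.m_congr (G.inv_m a) rfl _).trans ?_
    exact G.unit_m' b (G.s a) h _
  have e : G.m (G.m (G.inv a) a (G.s_inv a)) b
      ((G.s_m (G.inv a) a (G.s_inv a)).trans h) =
      G.m (G.inv a) (G.m a b h) ((G.s_inv a).trans (G.t_m a b h).symm) :=
    G.m_assoc (G.inv a) a b (G.s_inv a) h
  have e3 : G.m (G.inv a) (G.m a b h) ((G.s_inv a).trans (G.t_m a b h).symm) =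
      G.inv a := by
    refine (G.m_congr rfl hab _).trans ?_
    exact G.m_unit' (G.inv a) (G.t a) (G.s_inv a) _
  exact (e2.symm.trans (e.trans e3))

theorem Hom.mor_inv {G H : EtaleGroupoid} (φ : EtaleGroupoid.Hom G H) (g : G.Mor) :
    φ.mor (G.inv g) = H.inv (φ.mor g) := by
  refine H.inv_unique (φ.mor g) (φ.mor (G.inv g))
    (by rw [φ.s_comm, φ.t_comm, G.t_inv]) ?_
  refine Eq.trans ((φ.m_comm g (G.inv g) (G.t_inv g).symm).symm) ?_
  rw [G.m_inv, φ.unit_comm, φ.t_comm]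

/-- `φ((A ∘ w) ∘ B⁻¹) = x` whenever `φ(w) = (φ(A)⁻¹ ∘ x) ∘ φ(B)`. -/
theorem Hom.mor_sandwich {G H : EtaleGroupoid} (φ : EtaleGroupoid.Hom G H)
    (A B w : G.Mor) (x : H.Mor)
    (h1 : H.s (H.inv (φ.mor A)) = H.t x)
    (h2 : H.s (H.m (H.inv (φ.mor A)) x h1) = H.t (φ.mor B))
    (hw : φ.mor w = H.m (H.m (H.inv (φ.mor A)) x h1) (φ.mor B) h2)
    (r1 : G.s A = G.t w) (r2 : G.s (G.m A w r1) = G.t (G.inv B)) :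
    φ.mor (G.m (G.m A w r1) (G.inv B) r2) = x := by
  refine (φ.m_comm (G.m A w r1) (G.inv B) r2).trans ?_
  refine (H.m_congr (φ.m_comm A w r1) (φ.mor_inv B) _).trans ?_
  refine (H.m_congr (H.m_congr rfl hw _) rfl _).trans ?_
  exact H.sandwich (φ.mor A) (φ.mor B) x h1 h2 _ _

theorem Hom.mor_conj_congr {G H : EtaleGroupoid} (φ : EtaleGroupoid.Hom G H)
    {a b g g' : G.Mor} (hg : φ.mor g = φ.mor g')
    (h1 : G.s a = G.t g) (h2 : G.s (G.m a g h1) = G.t b)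
    (h1' : G.s a = G.t g') (h2' : G.s (G.m a g' h1') = G.t b) :
    φ.mor (G.m (G.m a g h1) b h2) = φ.mor (G.m (G.m a g' h1') b h2') := by
  refine (φ.m_comm _ _ _).trans (Eq.trans ?_ (φ.m_comm _ _ _).symm)
  refine (H.m_congr (φ.m_comm a g h1) rfl _).trans
    (Eq.trans ?_ (H.m_congr (φ.m_comm a g' h1') rfl _).symm)
  exact H.m_congr (H.m_congr rfl hg _) rfl _

/-! ### Topological lemmas -/

theorem continuous_m₂ {A : Type*} [TopologicalSpace A] (G : EtaleGroupoid)
    {f₁ f₂ : A → G.Mor} (hf₁ : Continuous f₁) (hf₂ : Continuous f₂)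
    (h : ∀ a, G.s (f₁ a) = G.t (f₂ a)) :
    Continuous (fun a => G.m (f₁ a) (f₂ a) (h a)) :=
  G.continuous_m.comp (Continuous.subtype_mk (hf₁.prodMk hf₂) h)

end EtaleGroupoid

theorem pullback_snd_surjective {A B S : Type*} {f : A → S} {g : B → S}
    (hf : Function.Surjective f) :
    Function.Surjective (fun p : {p : A × B // f p.1 = g p.2} => p.1.2) := by
  intro b
  obtain ⟨a, ha⟩ := hf (g b)
  exact ⟨⟨(a, b), ha⟩, rfl⟩

theorem isOpenMap_pullback_snd {A B S : Type*} [TopologicalSpace A] [TopologicalSpace B]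
    [TopologicalSpace S] {f : A → S} {g : B → S} (hf : IsOpenMap f) (hg : Continuous g) :
    IsOpenMap (fun p : {p : A × B // f p.1 = g p.2} => p.1.2) := by
  intro O hO
  obtain ⟨O', hO', rfl⟩ := isOpen_induced_iff.mp hO
  rw [isOpen_iff_forall_mem_open]
  rintro _ ⟨⟨⟨a, b⟩, hab⟩, hmem, rfl⟩
  obtain ⟨u, v, hu, hv, hau, hbv, huv⟩ := isOpen_prod_iff.mp hO' a b hmem
  refine ⟨v ∩ g ⁻¹' (f '' u), ?_, hv.inter (hg.isOpen_preimage _ (hf u hu)),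
    hbv, ⟨a, hau, hab⟩⟩
  rintro b2 ⟨hb2v, a2, ha2u, ha2⟩
  exact ⟨⟨(a2, b2), ha2⟩, huv ⟨ha2u, hb2v⟩, rfl⟩


/-- If `φ : Y ⟶ X`, `ψ : Z ⟶ Y`, `ξ : U ⟶ Z` are morphisms of étale groupoids such that
both `φ ∘ ψ` and `ψ ∘ ξ` are Morita equivalences, then `φ` is a Morita equivalence. -/
theorem isMorita_of_comp_comp {X Y Z U : EtaleGroupoid}
    (φ : EtaleGroupoid.Hom Y X) (ψ : EtaleGroupoid.Hom Z Y) (ξ : EtaleGroupoid.Hom U Z)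
    (hφψ : (φ.comp ψ).IsMorita) (hψξ : (ψ.comp ξ).IsMorita) :
    φ.IsMorita := by
  obtain ⟨⟨hχsurj, hχopen⟩, hχff⟩ := hφψ
  obtain ⟨⟨hθsurj, hθopen⟩, hθff⟩ := hψξ
  have hχinj : Function.Injective (φ.comp ψ).compare := hχff.bijective.1
  have hχsur : Function.Surjective (φ.comp ψ).compare := hχff.bijective.2
  -- continuity of the comparison map
  have hcont : Continuous φ.compare :=
    Continuous.subtype_mk
      (φ.continuous_mor.prodMk (Y.continuous_s.prodMk Y.continuous_t)) _
  -- injectivity of the comparison map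
  have hinj : Function.Injective φ.compare := by
    intro g g' hgg
    have h1 : φ.mor g = φ.mor g' := congrArg (fun E => E.1.1) hgg
    have h2 : Y.s g = Y.s g' := congrArg (fun E => E.1.2.1) hgg
    have h3 : Y.t g = Y.t g' := congrArg (fun E => E.1.2.2) hgg
    obtain ⟨⟨⟨y₁, u₀⟩, hsy⟩, hty⟩ := hθsurj (Y.s g)
    replace hsy : Y.s y₁ = (ψ.comp ξ).obj u₀ := hsy
    replace hty : Y.t y₁ = Y.s g := hty
    obtain ⟨⟨⟨y₁', u₀'⟩, hsy'⟩, hty'⟩ := hθsurj (Y.t g)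
    replace hsy' : Y.s y₁' = (ψ.comp ξ).obj u₀' := hsy'
    replace hty' : Y.t y₁' = Y.t g := hty'
    have p1 : Y.s (Y.inv y₁') = Y.t g := (Y.s_inv y₁').trans hty'
    have p2 : Y.s (Y.m (Y.inv y₁') g p1) = Y.t y₁ := (Y.s_m _ _ _).trans hty.symm
    have p1' : Y.s (Y.inv y₁') = Y.t g' := p1.trans h3
    have p2' : Y.s (Y.m (Y.inv y₁') g' p1') = Y.t y₁ :=
      (Y.s_m _ _ _).trans (h2.symm.trans hty.symm)
    have c1 : Y.s (Y.m (Y.m (Y.inv y₁') g p1) y₁ p2) = (ψ.comp ξ).obj u₀ :=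
      (Y.s_m _ _ _).trans hsy
    have c2 : Y.t (Y.m (Y.m (Y.inv y₁') g p1) y₁ p2) = (ψ.comp ξ).obj u₀' :=
      (Y.t_m _ _ _).trans ((Y.t_m _ _ _).trans ((Y.t_inv y₁').trans hsy'))
    have c1' : Y.s (Y.m (Y.m (Y.inv y₁') g' p1') y₁ p2') = (ψ.comp ξ).obj u₀ :=
      (Y.s_m _ _ _).trans hsy
    have c2' : Y.t (Y.m (Y.m (Y.inv y₁') g' p1') y₁ p2') = (ψ.comp ξ).obj u₀' :=
      (Y.t_m _ _ _).trans ((Y.t_m _ _ _).trans ((Y.t_inv y₁').trans hsy'))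
    obtain ⟨k, hk⟩ := hθff.bijective.2
      ⟨(Y.m (Y.m (Y.inv y₁') g p1) y₁ p2, (u₀, u₀')), c1, c2⟩
    obtain ⟨k', hk'⟩ := hθff.bijective.2
      ⟨(Y.m (Y.m (Y.inv y₁') g' p1') y₁ p2', (u₀, u₀')), c1', c2'⟩
    have hk1 : ψ.mor (ξ.mor k) = Y.m (Y.m (Y.inv y₁') g p1) y₁ p2 :=
      congrArg (fun E => E.1.1) hk
    have hk2 : U.s k = u₀ := congrArg (fun E => E.1.2.1) hk
    have hk3 : U.t k = u₀' := congrArg (fun E => E.1.2.2) hk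
    have hk1' : ψ.mor (ξ.mor k') = Y.m (Y.m (Y.inv y₁') g' p1') y₁ p2' :=
      congrArg (fun E => E.1.1) hk'
    have hk2' : U.s k' = u₀ := congrArg (fun E => E.1.2.1) hk'
    have hk3' : U.t k' = u₀' := congrArg (fun E => E.1.2.2) hk'
    have hφh : φ.mor (Y.m (Y.m (Y.inv y₁') g p1) y₁ p2) =
        φ.mor (Y.m (Y.m (Y.inv y₁') g' p1') y₁ p2') :=
      φ.mor_conj_congr h1 p1 p2 p1' p2'
    have hkk : (φ.comp ψ).compare (ξ.mor k) = (φ.comp ψ).compare (ξ.mor k') := by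
      apply Subtype.ext
      refine Prod.ext ?_ (Prod.ext ?_ ?_)
      · show φ.mor (ψ.mor (ξ.mor k)) = φ.mor (ψ.mor (ξ.mor k'))
        rw [hk1, hk1']; exact hφh
      · show Z.s (ξ.mor k) = Z.s (ξ.mor k')
        rw [ξ.s_comm, ξ.s_comm, hk2, hk2']
      · show Z.t (ξ.mor k) = Z.t (ξ.mor k')
        rw [ξ.t_comm, ξ.t_comm, hk3, hk3']
    have hzz : ξ.mor k = ξ.mor k' := hχinj hkk
    have hhh : Y.m (Y.m (Y.inv y₁') g p1) y₁ p2 =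
        Y.m (Y.m (Y.inv y₁') g' p1') y₁ p2' :=
      hk1.symm.trans ((congrArg ψ.mor hzz).trans hk1')
    have q3 : Y.s y₁' = Y.t (Y.m (Y.m (Y.inv y₁') g p1) y₁ p2) :=
      ((Y.t_m _ _ _).trans ((Y.t_m _ _ _).trans (Y.t_inv y₁'))).symm
    have q4 : Y.s (Y.m y₁' (Y.m (Y.m (Y.inv y₁') g p1) y₁ p2) q3) = Y.t (Y.inv y₁) :=
      (Y.s_m _ _ _).trans ((Y.s_m _ _ _).trans (Y.t_inv y₁).symm)
    have q3' : Y.s y₁' = Y.t (Y.m (Y.m (Y.inv y₁') g' p1') y₁ p2') :=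
      ((Y.t_m _ _ _).trans ((Y.t_m _ _ _).trans (Y.t_inv y₁'))).symm
    have q4' : Y.s (Y.m y₁' (Y.m (Y.m (Y.inv y₁') g' p1') y₁ p2') q3') =
        Y.t (Y.inv y₁) :=
      (Y.s_m _ _ _).trans ((Y.s_m _ _ _).trans (Y.t_inv y₁).symm)
    have e_g : Y.m (Y.m y₁' (Y.m (Y.m (Y.inv y₁') g p1) y₁ p2) q3) (Y.inv y₁) q4 = g :=
      Y.sandwich y₁' y₁ g p1 p2 q3 q4
    have e_g' : Y.m (Y.m y₁' (Y.m (Y.m (Y.inv y₁') g' p1') y₁ p2') q3')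
        (Y.inv y₁) q4' = g' :=
      Y.sandwich y₁' y₁ g' p1' p2' q3' q4'
    refine e_g.symm.trans (Eq.trans ?_ e_g')
    exact Y.m_congr (Y.m_congr rfl hhh q3) rfl q4
  -- surjectivity of the comparison map
  have hsur : Function.Surjective φ.compare := by
    rintro ⟨⟨xt, yt₀, yt₀'⟩, hst, htt⟩
    obtain ⟨⟨⟨y₁, u₀⟩, hsy⟩, hty⟩ := hθsurj yt₀
    replace hsy : Y.s y₁ = (ψ.comp ξ).obj u₀ := hsy
    replace hty : Y.t y₁ = yt₀ := hty
    obtain ⟨⟨⟨y₁', u₀'⟩, hsy'⟩, hty'⟩ := hθsurj yt₀'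
    replace hsy' : Y.s y₁' = (ψ.comp ξ).obj u₀' := hsy'
    replace hty' : Y.t y₁' = yt₀' := hty'
    have q1 : X.s (X.inv (φ.mor y₁')) = X.t xt := by
      rw [X.s_inv, φ.t_comm, hty']; exact htt.symm
    have q2 : X.s (X.m (X.inv (φ.mor y₁')) xt q1) = X.t (φ.mor y₁) := by
      rw [X.s_m, φ.t_comm, hty]; exact hst
    have c1 : X.s (X.m (X.m (X.inv (φ.mor y₁')) xt q1) (φ.mor y₁) q2) =
        (φ.comp ψ).obj (ξ.obj u₀) := by
      rw [X.s_m, φ.s_comm, hsy]; rfl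
    have c2 : X.t (X.m (X.m (X.inv (φ.mor y₁')) xt q1) (φ.mor y₁) q2) =
        (φ.comp ψ).obj (ξ.obj u₀') := by
      rw [X.t_m, X.t_m, X.t_inv, φ.s_comm, hsy']; rfl
    obtain ⟨z₁, hz₁⟩ := hχsur
      ⟨(X.m (X.m (X.inv (φ.mor y₁')) xt q1) (φ.mor y₁) q2, (ξ.obj u₀, ξ.obj u₀')), c1, c2⟩
    have hz1 : φ.mor (ψ.mor z₁) =
        X.m (X.m (X.inv (φ.mor y₁')) xt q1) (φ.mor y₁) q2 :=
      congrArg (fun E => E.1.1) hz₁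
    have hz2 : Z.s z₁ = ξ.obj u₀ := congrArg (fun E => E.1.2.1) hz₁
    have hz3 : Z.t z₁ = ξ.obj u₀' := congrArg (fun E => E.1.2.2) hz₁
    have r1 : Y.s y₁' = Y.t (ψ.mor z₁) := by rw [ψ.t_comm, hz3]; exact hsy'
    have r2 : Y.s (Y.m y₁' (ψ.mor z₁) r1) = Y.t (Y.inv y₁) := by
      rw [Y.s_m, ψ.s_comm, hz2, Y.t_inv]; exact hsy.symm
    refine ⟨Y.m (Y.m y₁' (ψ.mor z₁) r1) (Y.inv y₁) r2, ?_⟩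
    apply Subtype.ext
    refine Prod.ext ?_ (Prod.ext ?_ ?_)
    · exact φ.mor_sandwich y₁' y₁ (ψ.mor z₁) xt q1 q2 hz1 r1 r2
    · show Y.s _ = yt₀
      rw [Y.s_m, Y.s_inv]; exact hty
    · show Y.t _ = yt₀'
      rw [Y.t_m, Y.t_m]; exact hty'
  -- openness of the comparison map, via a pullback along `t ∘ pr₁` for `ψ ∘ ξ`
  have hopenc : IsOpenMap φ.compare := by
    let Pθ := {p : Y.Mor × U.Obj // Y.s p.1 = (ψ.comp ξ).obj p.2}
    let T : Pθ → Y.Obj := fun p => Y.t p.1.1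
    let Eφ := {p : X.Mor × (Y.Obj × Y.Obj) //
      X.s p.1 = φ.obj p.2.1 ∧ X.t p.1 = φ.obj p.2.2}
    let pr : Eφ → Y.Obj × Y.Obj := fun p => p.1.2
    let D := {p : (Pθ × Pθ) × Eφ // Prod.map T T p.1 = pr p.2}
    have hπopen : IsOpenMap (fun p : D => p.1.2) :=
      isOpenMap_pullback_snd (hθopen.prodMap hθopen)
        (continuous_snd.comp continuous_subtype_val)
    have hπsurj : Function.Surjective (fun p : D => p.1.2) :=
      pullback_snd_surjective (hθsurj.prodMap hθsurj)
    have hd1 : ∀ d : D, Y.t d.1.1.1.1.1 = d.1.2.1.2.1 :=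
      fun d => congrArg Prod.fst d.2
    have hd2 : ∀ d : D, Y.t d.1.1.2.1.1 = d.1.2.1.2.2 :=
      fun d => congrArg Prod.snd d.2
    have q1 : ∀ d : D, X.s (X.inv (φ.mor d.1.1.2.1.1)) = X.t d.1.2.1.1 := fun d => by
      rw [X.s_inv, φ.t_comm, hd2 d]; exact d.1.2.2.2.symm
    have q2 : ∀ d : D, X.s (X.m (X.inv (φ.mor d.1.1.2.1.1)) d.1.2.1.1 (q1 d)) =
        X.t (φ.mor d.1.1.1.1.1) := fun d => by
      rw [X.s_m, φ.t_comm, hd1 d]; exact d.1.2.2.1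
    have c1 : ∀ d : D, X.s (X.m (X.m (X.inv (φ.mor d.1.1.2.1.1)) d.1.2.1.1 (q1 d))
        (φ.mor d.1.1.1.1.1) (q2 d)) = (φ.comp ψ).obj (ξ.obj d.1.1.1.1.2) := fun d => by
      rw [X.s_m, φ.s_comm, d.1.1.1.2]; rfl
    have c2 : ∀ d : D, X.t (X.m (X.m (X.inv (φ.mor d.1.1.2.1.1)) d.1.2.1.1 (q1 d))
        (φ.mor d.1.1.1.1.1) (q2 d)) = (φ.comp ψ).obj (ξ.obj d.1.1.2.1.2) := fun d => by
      rw [X.t_m, X.t_m, X.t_inv, φ.s_comm, d.1.1.2.2]; rfl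
    let Hχ := hχff.homeomorph (φ.comp ψ).compare
    let Ech : D → {p : X.Mor × (Z.Obj × Z.Obj) //
        X.s p.1 = (φ.comp ψ).obj p.2.1 ∧ X.t p.1 = (φ.comp ψ).obj p.2.2} := fun d =>
      ⟨(X.m (X.m (X.inv (φ.mor d.1.1.2.1.1)) d.1.2.1.1 (q1 d)) (φ.mor d.1.1.1.1.1) (q2 d),
        (ξ.obj d.1.1.1.1.2, ξ.obj d.1.1.2.1.2)), c1 d, c2 d⟩
    let z : D → Z.Mor := fun d => Hχ.symm (Ech d)
    have hz : ∀ d, (φ.comp ψ).compare (z d) = Ech d := fun d =>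
      Hχ.apply_symm_apply (Ech d)
    have hz1 : ∀ d, φ.mor (ψ.mor (z d)) =
        X.m (X.m (X.inv (φ.mor d.1.1.2.1.1)) d.1.2.1.1 (q1 d)) (φ.mor d.1.1.1.1.1) (q2 d) :=
      fun d => congrArg (fun E => E.1.1) (hz d)
    have hz2 : ∀ d, Z.s (z d) = ξ.obj d.1.1.1.1.2 :=
      fun d => congrArg (fun E => E.1.2.1) (hz d)
    have hz3 : ∀ d, Z.t (z d) = ξ.obj d.1.1.2.1.2 :=
      fun d => congrArg (fun E => E.1.2.2) (hz d)
    have r1 : ∀ d : D, Y.s d.1.1.2.1.1 = Y.t (ψ.mor (z d)) := fun d => by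
      rw [ψ.t_comm, hz3 d]; exact d.1.1.2.2
    have r2 : ∀ d : D, Y.s (Y.m d.1.1.2.1.1 (ψ.mor (z d)) (r1 d)) =
        Y.t (Y.inv d.1.1.1.1.1) := fun d => by
      rw [Y.s_m, ψ.s_comm, hz2 d, Y.t_inv]; exact (d.1.1.1.2).symm
    let GG : D → Y.Mor := fun d =>
      Y.m (Y.m d.1.1.2.1.1 (ψ.mor (z d)) (r1 d)) (Y.inv d.1.1.1.1.1) (r2 d)
    have hGGcomp : ∀ d, φ.compare (GG d) = d.1.2 := fun d => by
      apply Subtype.ext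
      refine Prod.ext ?_ (Prod.ext ?_ ?_)
      · exact φ.mor_sandwich _ _ _ _ (q1 d) (q2 d) (hz1 d) (r1 d) (r2 d)
      · show Y.s (GG d) = d.1.2.1.2.1
        exact (Y.s_m _ _ _).trans ((Y.s_inv _).trans (hd1 d))
      · show Y.t (GG d) = d.1.2.1.2.2
        exact (Y.t_m _ _ _).trans ((Y.t_m _ _ _).trans (hd2 d))
    have harrow1 : Continuous (fun d : D => d.1.1.1.1.1) :=
      continuous_fst.comp (continuous_subtype_val.comp
        (continuous_fst.comp (continuous_fst.comp continuous_subtype_val)))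
    have harrow2 : Continuous (fun d : D => d.1.1.2.1.1) :=
      continuous_fst.comp (continuous_subtype_val.comp
        (continuous_snd.comp (continuous_fst.comp continuous_subtype_val)))
    have hu1 : Continuous (fun d : D => d.1.1.1.1.2) :=
      continuous_snd.comp (continuous_subtype_val.comp
        (continuous_fst.comp (continuous_fst.comp continuous_subtype_val)))
    have hu2 : Continuous (fun d : D => d.1.1.2.1.2) :=
      continuous_snd.comp (continuous_subtype_val.comp
        (continuous_snd.comp (continuous_fst.comp continuous_subtype_val)))
    have hxt : Continuous (fun d : D => d.1.2.1.1) :=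
      continuous_fst.comp (continuous_subtype_val.comp
        (continuous_snd.comp continuous_subtype_val))
    have hEchcont : Continuous Ech :=
      Continuous.subtype_mk
        ((X.continuous_m₂
            (X.continuous_m₂ (X.continuous_inv.comp (φ.continuous_mor.comp harrow2))
              hxt q1)
            (φ.continuous_mor.comp harrow1) q2).prodMk
          ((ξ.continuous_obj.comp hu1).prodMk (ξ.continuous_obj.comp hu2))) _
    have hzcont : Continuous z := Hχ.symm.continuous.comp hEchcont
    have hGGcont : Continuous GG :=
      Y.continuous_m₂ (Y.continuous_m₂ harrow2 (ψ.continuous_mor.comp hzcont) r1)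
        (Y.continuous_inv.comp harrow1) r2
    intro W hW
    have himg : φ.compare '' W = (fun d : D => d.1.2) '' (GG ⁻¹' W) := by
      apply Set.Subset.antisymm
      · rintro _ ⟨g, hgW, rfl⟩
        obtain ⟨d, hd⟩ := hπsurj (φ.compare g)
        have hdg : GG d = g := hinj ((hGGcomp d).trans hd)
        exact ⟨d, by rw [Set.mem_preimage, hdg]; exact hgW, hd⟩
      · rintro _ ⟨d, hd, rfl⟩
        exact ⟨GG d, hd, hGGcomp d⟩
    rw [himg]
    exact hπopen _ (hGGcont.isOpen_preimage _ hW)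
  -- openness of `t ∘ pr₁` for `φ`
  have hTopen : IsOpenMap
      (fun p : {p : X.Mor × Y.Obj // X.s p.1 = φ.obj p.2} => X.t p.1.1) := by
    intro W hW
    obtain ⟨W₀, hW₀, rfl⟩ := isOpen_induced_iff.mp hW
    rw [isOpen_iff_forall_mem_open]
    rintro _ ⟨⟨⟨x₁, y₀⟩, hp⟩, hpW, rfl⟩
    replace hp : X.s x₁ = φ.obj y₀ := hp
    replace hpW : (x₁, y₀) ∈ W₀ := hpW
    obtain ⟨⟨⟨y₁, u₀⟩, hsy⟩, hty⟩ := hθsurj y₀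
    replace hsy : Y.s y₁ = (ψ.comp ξ).obj u₀ := hsy
    replace hty : Y.t y₁ = y₀ := hty
    obtain ⟨e, hy₁e, he⟩ := Y.etale_s y₁
    have hσs : ∀ v ∈ e.target, Y.s (e.symm v) = v := fun v hv => by
      rw [he]; exact e.right_inv hv
    let D₁ := {q : {p : X.Mor × Z.Obj // X.s p.1 = (φ.comp ψ).obj p.2} //
      ψ.obj q.1.2 ∈ e.target}
    have prf : ∀ q : D₁,
        X.s q.1.1.1 = X.t (X.inv (φ.mor (e.symm (ψ.obj q.1.1.2)))) := fun q => by
      rw [X.t_inv, φ.s_comm, hσs _ q.2]; exact q.1.2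
    let F₀ : D₁ → X.Mor × Y.Obj := fun q =>
      (X.m q.1.1.1 (X.inv (φ.mor (e.symm (ψ.obj q.1.1.2)))) (prf q),
        Y.t (e.symm (ψ.obj q.1.1.2)))
    have hσcont : Continuous (fun q : D₁ => e.symm (ψ.obj q.1.1.2)) :=
      e.continuousOn_symm.comp_continuous
        (ψ.continuous_obj.comp (continuous_snd.comp
          (continuous_subtype_val.comp continuous_subtype_val)))
        (fun q => q.2)
    have hF₀cont : Continuous F₀ :=
      (X.continuous_m₂
        (continuous_fst.comp (continuous_subtype_val.comp continuous_subtype_val))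
        (X.continuous_inv.comp (φ.continuous_mor.comp hσcont)) prf).prodMk
        (Y.continuous_t.comp hσcont)
    have pr₀ : X.s x₁ = X.t (φ.mor y₁) := by rw [φ.t_comm, hty]; exact hp
    have pr₁ : X.s (X.m x₁ (φ.mor y₁) pr₀) = (φ.comp ψ).obj (ξ.obj u₀) := by
      rw [X.s_m, φ.s_comm, hsy]; rfl
    have pr₂ : ψ.obj (ξ.obj u₀) ∈ e.target := by
      have hmem : Y.s y₁ ∈ e.target := by rw [he]; exact e.map_source hy₁e
      rwa [hsy] at hmem
    let q₀ : D₁ := ⟨⟨(X.m x₁ (φ.mor y₁) pr₀, ξ.obj u₀), pr₁⟩, pr₂⟩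
    have hsymm : e.symm (ψ.obj (ξ.obj u₀)) = y₁ := by
      have h1 : ψ.obj (ξ.obj u₀) = Y.s y₁ := hsy.symm
      rw [h1, he]; exact e.left_inv hy₁e
    have hF₀q₀ : F₀ q₀ = (x₁, y₀) := by
      refine Prod.ext ?_ ?_
      · show X.m (X.m x₁ (φ.mor y₁) pr₀)
          (X.inv (φ.mor (e.symm (ψ.obj (ξ.obj u₀))))) (prf q₀) = x₁
        refine (X.m_congr rfl (congrArg (fun w => X.inv (φ.mor w)) hsymm) _).trans ?_
        exact X.m_m_inv x₁ (φ.mor y₁) pr₀ _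
      · show Y.t (e.symm (ψ.obj (ξ.obj u₀))) = y₀
        rw [hsymm]; exact hty
    refine ⟨(fun p : {p : X.Mor × Z.Obj // X.s p.1 = (φ.comp ψ).obj p.2} =>
        X.t p.1.1) '' (Subtype.val '' (F₀ ⁻¹' W₀)), ?_, ?_, ?_⟩
    · rintro _ ⟨p, ⟨q, hq, rfl⟩, rfl⟩
      refine ⟨⟨F₀ q, ?_⟩, hq, ?_⟩
      · show X.s (X.m q.1.1.1 (X.inv (φ.mor (e.symm (ψ.obj q.1.1.2)))) (prf q)) =
          φ.obj (Y.t (e.symm (ψ.obj q.1.1.2)))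
        rw [X.s_m, X.s_inv, φ.t_comm]
      · exact X.t_m _ _ _
    · have hopenD : IsOpen {q : {p : X.Mor × Z.Obj //
          X.s p.1 = (φ.comp ψ).obj p.2} | ψ.obj q.1.2 ∈ e.target} :=
        e.open_target.preimage (ψ.continuous_obj.comp
          (continuous_snd.comp continuous_subtype_val))
      exact hχopen _ (hopenD.isOpenMap_subtype_val _ (hF₀cont.isOpen_preimage _ hW₀))
    · refine ⟨q₀.1, ⟨q₀, ?_, rfl⟩, X.t_m _ _ _⟩
      show F₀ q₀ ∈ W₀
      rw [hF₀q₀]; exact hpW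
  refine ⟨⟨?_, hTopen⟩, hcont, hopenc, hinj, hsur⟩
  intro x₀
  obtain ⟨⟨⟨x₁, z₀⟩, hsz⟩, hx⟩ := hχsurj x₀
  exact ⟨⟨(x₁, ψ.obj z₀), hsz⟩, hx⟩
end

section
/- Let C be a category and W a multiplicative system of morphisms (W contains identities, is closed under composition, and satisfies the left Ore condition and left cancellability making the calculus of left fractions possible). Define W_sat as the class of morphisms f : B ⟶ A such that there exist g : C' ⟶ B and h : D' ⟶ C' with f ∘ g ∈ W and g ∘ h ∈ W. Then W_sat is itself closed under composition and contains W, and (W_sat)_sat = W_sat. -/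
open CategoryTheory

universe v u

/-- The right saturation of a class `W` of morphisms in a category: `f : b ⟶ a` belongs to
`RightSatCat W` if there are objects `c`, `d` and morphisms `g : c ⟶ b`, `h : d ⟶ c` such
that both `f ∘ g = g ≫ f` and `g ∘ h = h ≫ g` belong to `W`. -/
def RightSatCat {C : Type u} [Category.{v} C] (W : MorphismProperty C) :
    MorphismProperty C :=
  fun b _ f => ∃ (c d : C) (g : c ⟶ b) (h : d ⟶ c), W (g ≫ f) ∧ W (h ≫ g)

/-- Let `W` be a multiplicative system admitting a calculus of fractions: it contains all
identities, is closed under composition, satisfies the Ore condition (for every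
`f : A' ⟶ B` and `v : B' ⟶ B` in `W` there exist `v' : A'' ⟶ A'` in `W` and
`f' : A'' ⟶ B'` with `v' ≫ f = f' ≫ v`), and satisfies the cancellation condition
(if `f₁ ≫ v = f₂ ≫ v` with `v ∈ W` then there is `u ∈ W` with `u ≫ f₁ = u ≫ f₂`).
Then the right saturation `RightSatCat W` contains `W`, is closed under composition, and
is itself right saturated: `RightSatCat (RightSatCat W) = RightSatCat W`. -/
theorem rightSatCat_idem {C : Type u} [Category.{v} C] (W : MorphismProperty C)
    (hid : ∀ a : C, W (𝟙 a))
    (hcomp : ∀ ⦃x y z : C⦄ (f : x ⟶ y) (g : y ⟶ z), W f → W g → W (f ≫ g))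
    (hore : ∀ ⦃A' B B' : C⦄ (f : A' ⟶ B) (v : B' ⟶ B), W v →
      ∃ (A'' : C) (v' : A'' ⟶ A') (f' : A'' ⟶ B'), W v' ∧ v' ≫ f = f' ≫ v)
    (hcancel : ∀ ⦃A B B' : C⦄ (f₁ f₂ : A ⟶ B) (v : B ⟶ B'), W v → f₁ ≫ v = f₂ ≫ v →
      ∃ (A' : C) (u : A' ⟶ A), W u ∧ u ≫ f₁ = u ≫ f₂) :
    (∀ ⦃x y : C⦄ (f : x ⟶ y), W f → RightSatCat W f) ∧
    (∀ ⦃x y z : C⦄ (f : x ⟶ y) (g : y ⟶ z),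
      RightSatCat W f → RightSatCat W g → RightSatCat W (f ≫ g)) ∧
    RightSatCat (RightSatCat W) = RightSatCat W := by
  haveI : W.IsMultiplicative :=
    { id_mem := hid, comp_mem := fun f g hf hg => hcomp f g hf hg }
  haveI : W.HasRightCalculusOfFractions :=
    { exists_rightFraction := fun X Y φ => by
        obtain ⟨A'', v', f', hv', eq⟩ := hore φ.f φ.s φ.hs
        exact ⟨MorphismProperty.RightFraction.mk v' hv' f', eq⟩
      ext := fun X Y Y' f₁ f₂ s hs h => by
        obtain ⟨A', u, hu, h'⟩ := hcancel f₁ f₂ s hs h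
        exact ⟨A', u, hu, h'⟩ }
  let L := W.Q
  -- two-out-of-six style lemma in the localized category
  have isIso_mid : ∀ {a b c d : W.Localization} (o : a ⟶ b) (p : b ⟶ c) (q : c ⟶ d),
      IsIso (o ≫ p) → IsIso (p ≫ q) → IsIso p := by
    intro a b c d o p q h1 h2
    have hr : p ≫ (q ≫ inv (p ≫ q)) = 𝟙 _ := by
      rw [← Category.assoc, IsIso.hom_inv_id]
    have hℓ : (inv (o ≫ p) ≫ o) ≫ p = 𝟙 _ := by
      rw [Category.assoc, IsIso.inv_hom_id]
    have key : q ≫ inv (p ≫ q) = inv (o ≫ p) ≫ o := by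
      calc q ≫ inv (p ≫ q)
          = ((inv (o ≫ p) ≫ o) ≫ p) ≫ (q ≫ inv (p ≫ q)) := by
            rw [hℓ, Category.id_comp]
        _ = (inv (o ≫ p) ≫ o) ≫ (p ≫ (q ≫ inv (p ≫ q))) := by
            simp only [Category.assoc]
        _ = inv (o ≫ p) ≫ o := by rw [hr, Category.comp_id]
    exact ⟨⟨q ≫ inv (p ≫ q), hr, by rw [key]; exact hℓ⟩⟩
  -- any morphism in `RightSatCat W` is inverted by the localization functor
  have sat_iso : ∀ {x y : C} (f : x ⟶ y), RightSatCat W f → IsIso (L.map f) := by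
    rintro x y f ⟨c, d, g, h, h1, h2⟩
    have i1 : IsIso (L.map h ≫ L.map g) := by
      rw [← L.map_comp]; exact Localization.inverts L W _ h2
    have i2 : IsIso (L.map g ≫ L.map f) := by
      rw [← L.map_comp]; exact Localization.inverts L W _ h1
    haveI := isIso_mid _ _ _ i1 i2
    have : L.map f = inv (L.map g) ≫ (L.map g ≫ L.map f) := by simp
    rw [this]
    infer_instance
  -- half of the converse : if `L.map f` is invertible, one can find `g` with `W (g ≫ f)`
  have half : ∀ {x y : C} (f : x ⟶ y), IsIso (L.map f) →
      ∃ (c : C) (g : c ⟶ x), W (g ≫ f) := by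
    intro x y f hf
    obtain ⟨φ, hφ⟩ := Localization.exists_rightFraction L W (inv (L.map f))
    have key : L.map (φ.f ≫ f) = L.map φ.s := by
      rw [L.map_comp, ← φ.map_s_comp_map L (Localization.inverts L W), ← hφ,
        Category.assoc, IsIso.inv_hom_id, Category.comp_id]
    rw [MorphismProperty.map_eq_iff_precomp L W] at key
    obtain ⟨e, t, ht, heq⟩ := key
    refine ⟨e, t ≫ φ.f, ?_⟩
    rw [Category.assoc, heq]
    exact hcomp _ _ ht φ.hs
  -- full converse
  have iso_sat : ∀ {x y : C} (f : x ⟶ y), IsIso (L.map f) → RightSatCat W f := by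
    intro x y f hf
    obtain ⟨c, g, hg⟩ := half f hf
    have hgf : IsIso (L.map g ≫ L.map f) := by
      rw [← L.map_comp]; exact Localization.inverts L W _ hg
    have hLg : IsIso (L.map g) := by
      have : L.map g = (L.map g ≫ L.map f) ≫ inv (L.map f) := by simp
      rw [this]
      infer_instance
    obtain ⟨d, h, hh⟩ := half g hLg
    exact ⟨c, d, g, h, hg, hh⟩
  have hsub : ∀ ⦃x y : C⦄ (f : x ⟶ y), W f → RightSatCat W f := by
    intro x y f hf
    exact ⟨x, x, 𝟙 x, 𝟙 x, by simpa using hf, by simpa using hid x⟩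
  refine ⟨hsub, ?_, ?_⟩
  · intro x y z f g hf hg
    apply iso_sat
    haveI := sat_iso f hf
    haveI := sat_iso g hg
    rw [L.map_comp]
    infer_instance
  · funext b a f
    apply propext
    constructor
    · rintro ⟨c, d, g, h, h1, h2⟩
      apply iso_sat
      have i1 := sat_iso _ h1
      have i2 := sat_iso _ h2
      rw [L.map_comp] at i1 i2
      haveI := isIso_mid _ _ _ i2 i1
      have : L.map f = inv (L.map g) ≫ (L.map g ≫ L.map f) := by simp
      rw [this]
      infer_instance
    · rintro ⟨c, d, g, h, h1, h2⟩
      exact ⟨c, d, g, h, hsub _ h1, hsub _ h2⟩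
end
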